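/- arXiv:2102.08712 — 6 statements merged into one kernel-verified Lean document; each statement's English description precedes it below -/
import Mathlib

section
/- Let l ≥ 1, 1 ≤ q ≤ l-1, and let λ₁,…,λ_{2l} be real numbers. Then Σ_{j=2}^{2l} [ S_{2q}(λ₂,…,λ̂ⱼ,…,λ_{2l})/(2l-2q-1) + λ₁λⱼ S_{2q-2}(λ₂,…,λ̂ⱼ,…,λ_{2l})/(2q-1) ] = S_{2q}(λ₁,…,λ_{2l}), where S_k denotes the elementary symmetric polynomial of degree k. -/
open Finset

/-- The `k`-th elementary symmetric polynomial of the family `v` restricted to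
the index set `s`. -/
def esymmOn {R : Type*} [CommRing R] {ι : Type*} [DecidableEq ι]
    (s : Finset ι) (k : ℕ) (v : ι → R) : R :=
  ∑ t ∈ powersetCard k s, ∏ i ∈ t, v i

/-!
Deleting an index `j` from `s` and summing over `j` counts every `k`-subset `#s - k` times;
weighting the deletion by `v j` counts every `(k + 1)`-subset `k + 1` times. With `A` the
indices other than `i0`, the two sums in the identity are therefore `S_{2q}(A)` and
`λ_{i0} S_{2q-1}(A)`, whose sum is `S_{2q}` of all the variables.
-/

theorem Multiset.esymm_cons_succ {R : Type*} [CommRing R] (a : R) (m : Multiset R) (k : ℕ) :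
    (a ::ₘ m).esymm (k + 1) = m.esymm (k + 1) + a * m.esymm k := by
  simp [Multiset.esymm, Multiset.powersetCard_cons, Multiset.sum_map_mul_left]

section

variable {R : Type*} [CommRing R] {ι : Type*} [DecidableEq ι]

theorem esymmOn_eq_esymm (s : Finset ι) (k : ℕ) (v : ι → R) :
    esymmOn s k v = (s.val.map v).esymm k :=
  (s.esymm_map_val v k).symm

theorem esymmOn_succ_of_mem {s : Finset ι} {i : ι} (hi : i ∈ s) (k : ℕ) (v : ι → R) :
    esymmOn s (k + 1) v = esymmOn (s.erase i) (k + 1) v + v i * esymmOn (s.erase i) k v := by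
  simp only [esymmOn_eq_esymm, erase_val, ← Multiset.esymm_cons_succ, ← Multiset.map_cons,
    Multiset.cons_erase hi]

theorem esymmOn_eq_zero_of_card_lt {s : Finset ι} {k : ℕ} (h : #s < k) (v : ι → R) :
    esymmOn s k v = 0 := by
  rw [esymmOn, powersetCard_eq_empty.2 h, sum_empty]

theorem sum_esymmOn_erase (s : Finset ι) (k : ℕ) (v : ι → R) :
    ∑ j ∈ s, esymmOn (s.erase j) k v = (#s - k : ℕ) * esymmOn s k v := by
  have swap : ∑ j ∈ s, esymmOn (s.erase j) k v
      = ∑ t ∈ powersetCard k s, ∑ _j ∈ s \ t, ∏ i ∈ t, v i :=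
    sum_comm' fun j t => by simp only [mem_powersetCard, subset_erase, mem_sdiff]; tauto
  rw [swap, esymmOn, mul_sum]
  refine sum_congr rfl fun t ht => ?_
  rw [mem_powersetCard] at ht
  rw [sum_const, nsmul_eq_mul, card_sdiff_of_subset ht.1, ht.2]

theorem sum_mul_esymmOn_erase (s : Finset ι) (k : ℕ) (v : ι → R) :
    ∑ j ∈ s, v j * esymmOn (s.erase j) k v = (k + 1 : ℕ) * esymmOn s (k + 1) v := by
  rcases lt_or_ge #s (k + 1) with hs | hs
  · rw [esymmOn_eq_zero_of_card_lt hs, mul_zero]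
    refine sum_eq_zero fun j hj => ?_
    have hs₀ : 0 < #s := card_pos.2 ⟨j, hj⟩
    rw [esymmOn_eq_zero_of_card_lt (by rw [card_erase_of_mem hj]; omega), mul_zero]
  · have expand : ∑ _j ∈ s, esymmOn s (k + 1) v
        = ∑ j ∈ s, esymmOn (s.erase j) (k + 1) v
          + ∑ j ∈ s, v j * esymmOn (s.erase j) k v := by
      rw [← sum_add_distrib]
      exact sum_congr rfl fun j hj => esymmOn_succ_of_mem hj k v
    rw [sum_const, nsmul_eq_mul, sum_esymmOn_erase] at expand
    have hk : (#s : R) = (#s - (k + 1) : ℕ) + (k + 1 : ℕ) := by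
      rw [← Nat.cast_add, Nat.sub_add_cancel hs]
    rw [hk] at expand
    linear_combination -expand

end

theorem sum_esymm_deleted_identity_general (l : ℕ) (q : ℕ) (hq1 : 1 ≤ q)
    (hq2 : q ≤ l - 1) (lam : Fin (2 * l) → ℝ) (i0 : Fin (2 * l)) :
    ∑ j ∈ univ.erase i0,
        (esymmOn ((univ.erase i0).erase j) (2 * q) lam / ((2 * l - 2 * q - 1 : ℕ) : ℝ)
          + lam i0 * lam j *
              esymmOn ((univ.erase i0).erase j) (2 * q - 2) lam / ((2 * q - 1 : ℕ) : ℝ))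
      = esymmOn univ (2 * q) lam := by
  have hcard : #(univ.erase i0) = 2 * l - 1 := by simp
  have hc₁ : ((2 * l - 2 * q - 1 : ℕ) : ℝ) ≠ 0 := Nat.cast_ne_zero.2 (by omega)
  have hc₂ : ((2 * q - 1 : ℕ) : ℝ) ≠ 0 := Nat.cast_ne_zero.2 (by omega)
  have h₁ : 2 * l - 1 - 2 * q = 2 * l - 2 * q - 1 := by omega
  have h₂ : 2 * q - 2 + 1 = 2 * q - 1 := by omega
  have h₃ : 2 * q - 1 + 1 = 2 * q := by omega
  have hfirst := sum_esymmOn_erase (univ.erase i0) (2 * q) lam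
  have hsecond := sum_mul_esymmOn_erase (univ.erase i0) (2 * q - 2) lam
  have hsplit := esymmOn_succ_of_mem (mem_univ i0) (2 * q - 1) lam
  rw [hcard, h₁] at hfirst
  rw [h₂] at hsecond
  rw [h₃] at hsplit
  simp_rw [sum_add_distrib, ← sum_div, mul_assoc, ← mul_sum, hfirst, hsecond, hsplit]
  field_simp

/-- For `l ≥ 1`, `1 ≤ q ≤ l - 1` and reals `λ₁, …, λ_{2l}`:
`∑_{j=2}^{2l} [ S_{2q}(λ₂,…,λ̂ⱼ,…,λ_{2l})/(2l-2q-1)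
  + λ₁ λⱼ S_{2q-2}(λ₂,…,λ̂ⱼ,…,λ_{2l})/(2q-1) ] = S_{2q}(λ₁,…,λ_{2l})`. -/
theorem sum_esymm_deleted_identity (l : ℕ) (hl : 1 ≤ l) (q : ℕ) (hq1 : 1 ≤ q)
    (hq2 : q ≤ l - 1) (lam : Fin (2 * l) → ℝ) (i0 : Fin (2 * l)) (hi0 : (i0 : ℕ) = 0) :
    ∑ j ∈ univ.erase i0,
        (esymmOn ((univ.erase i0).erase j) (2 * q) lam / ((2 * l - 2 * q - 1 : ℕ) : ℝ)
          + lam i0 * lam j *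
              esymmOn ((univ.erase i0).erase j) (2 * q - 2) lam / ((2 * q - 1 : ℕ) : ℝ))
      = esymmOn univ (2 * q) lam :=
  sum_esymm_deleted_identity_general l q hq1 hq2 lam i0
end

section
/- Let n ≥ 2, c a real number, and consider the constant-coefficient recurrence j·b_{j-1} - c(n-j)·b_{j+1} = 0 for all 0 ≤ j ≤ n (with b_{-1} = b_{n+1} = 0). If c ≠ 0 and n = 2l is even, then every solution satisfies b_{2j+1} = 0 for all j, and b_{2p} = (1·3·5···(2p-1)) · b₀ / (c^p (n-1)(n-3)···(n-2p+1)) for all 1 ≤ p ≤ l. If c ≠ 0 and n is odd, the only solution is b_j = 0 for all j. If c = 0, solutions are exactly those with b₀ = b₁ = ⋯ = b_{n-1} = 0. -/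
/-!
For `c ≠ 0` the equation at `j < n` expresses `b (j + 1)` through `b (j - 1)`. Starting from the
equation at `j = 0`, whose `b (j - 1)` term has coefficient `0`, this forces `b 1 = b 3 = ⋯ = 0`
and determines every `b (2 * p)` from `b 0`. Read downwards from `j = n`, where the coefficient of
`b (n + 1)` vanishes, the equations force `b (n - 1) = b (n - 3) = ⋯ = 0` for any `c`; for odd `n`
these are the even indices. For `c = 0` the equation at `j` just says `j * b (j - 1) = 0`.
-/

open Finset

def IsRecurrenceSolution (n : ℕ) (c : ℝ) (b : ℕ → ℝ) : Prop :=
  ∀ j ≤ n, (j : ℝ) * b (j - 1) - c * ((n : ℝ) - (j : ℝ)) * b (j + 1) = 0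

namespace IsRecurrenceSolution

variable {n : ℕ} {c : ℝ} {b : ℕ → ℝ}

theorem succ_eq (h : IsRecurrenceSolution n c b) (hc : c ≠ 0) {j : ℕ} (hj : j < n) :
    b (j + 1) = j * b (j - 1) / (c * (n - j)) := by
  have hnj : (n : ℝ) - j ≠ 0 := sub_ne_zero.2 (by exact_mod_cast hj.ne')
  rw [eq_div_iff (mul_ne_zero hc hnj)]
  linarith [h j hj.le]

theorem pred_eq_zero (h : IsRecurrenceSolution n c b) {j : ℕ} (hj : 0 < j) (hjn : j ≤ n)
    (hb : c * (n - j) * b (j + 1) = 0) : b (j - 1) = 0 := by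
  have hrec := h j hjn
  rw [hb, sub_zero] at hrec
  exact (mul_eq_zero.1 hrec).resolve_left (Nat.cast_ne_zero.2 hj.ne')

theorem odd_eq_zero (h : IsRecurrenceSolution n c b) (hc : c ≠ 0) :
    ∀ j, 2 * j + 1 ≤ n → b (2 * j + 1) = 0
  | 0, hj => by simpa using h.succ_eq hc (j := 0) (by omega)
  | j + 1, _ => by
    rw [h.succ_eq hc (by omega), show 2 * (j + 1) - 1 = 2 * j + 1 by omega,
      h.odd_eq_zero hc j (by omega), mul_zero, zero_div]

theorem even_eq (h : IsRecurrenceSolution n c b) (hc : c ≠ 0) :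
    ∀ p, 2 * p ≤ n → b (2 * p) = (∏ i ∈ range p, (2 * (i : ℝ) + 1)) * b 0 /
      (c ^ p * ∏ i ∈ range p, ((n : ℝ) - (2 * (i : ℝ) + 1)))
  | 0, _ => by simp
  | p + 1, _ => by
    rw [show 2 * (p + 1) = 2 * p + 1 + 1 by ring, h.succ_eq hc (by omega), Nat.add_sub_cancel,
      h.even_eq hc p (by omega), prod_range_succ, prod_range_succ, pow_succ]
    rw [mul_div_assoc', div_div]
    push_cast
    congr 1 <;> ring

theorem sub_odd_eq_zero (h : IsRecurrenceSolution n c b) :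
    ∀ k, 2 * k + 1 ≤ n → b (n - (2 * k + 1)) = 0
  | 0, _ => by simpa using h.pred_eq_zero (j := n) (by omega) le_rfl (by simp)
  | k + 1, _ => by
    have hb := h.pred_eq_zero (j := n - (2 * k + 2)) (by omega) (by omega) (by
      rw [show n - (2 * k + 2) + 1 = n - (2 * k + 1) by omega, h.sub_odd_eq_zero k (by omega),
        mul_zero])
    rwa [show n - (2 * k + 2) - 1 = n - (2 * (k + 1) + 1) by omega] at hb

theorem eq_zero_of_odd (h : IsRecurrenceSolution n c b) (hc : c ≠ 0) (hn : Odd n) {j : ℕ}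
    (hj : j ≤ n) : b j = 0 := by
  obtain ⟨m, rfl⟩ := hn
  rcases Nat.even_or_odd' j with ⟨t, rfl | rfl⟩
  · simpa [show 2 * m + 1 - (2 * (m - t) + 1) = 2 * t by omega] using
      h.sub_odd_eq_zero (m - t) (by omega)
  · exact h.odd_eq_zero hc t hj

end IsRecurrenceSolution

theorem isRecurrenceSolution_zero_iff {n : ℕ} {b : ℕ → ℝ} :
    IsRecurrenceSolution n 0 b ↔ ∀ j < n, b j = 0 := by
  simp only [IsRecurrenceSolution, zero_mul, sub_zero, mul_eq_zero, Nat.cast_eq_zero]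
  constructor
  · intro h j hj
    simpa using h (j + 1) hj
  · rintro h (_ | j) hj
    · exact Or.inl rfl
    · exact Or.inr (h j hj)

theorem recurrence_solutions_general (n : ℕ) (c : ℝ) (b : ℕ → ℝ) :
    ((∀ j ≤ n, (j : ℝ) * b (j - 1) - c * ((n : ℝ) - (j : ℝ)) * b (j + 1) = 0) →
      c ≠ 0 →
      ((∀ l, n = 2 * l →
          (∀ j, 2 * j + 1 ≤ n → b (2 * j + 1) = 0) ∧
          (∀ p, 1 ≤ p → p ≤ l →
            b (2 * p) = (∏ i ∈ range p, (2 * (i : ℝ) + 1)) * b 0 /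
              (c ^ p * ∏ i ∈ range p, ((n : ℝ) - (2 * (i : ℝ) + 1))))) ∧
        (Odd n → ∀ j ≤ n, b j = 0))) ∧
    (c = 0 →
      ((∀ j ≤ n, (j : ℝ) * b (j - 1) - c * ((n : ℝ) - (j : ℝ)) * b (j + 1) = 0) ↔
        ∀ j < n, b j = 0)) := by
  refine ⟨fun h hc => ⟨fun l hl => ⟨?_, fun p _ hp => ?_⟩, fun hn j hj => ?_⟩, ?_⟩
  · exact IsRecurrenceSolution.odd_eq_zero h hc
  · exact IsRecurrenceSolution.even_eq h hc p (by omega)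
  · exact IsRecurrenceSolution.eq_zero_of_odd h hc hn hj
  · rintro rfl
    exact isRecurrenceSolution_zero_iff

/-- Solutions of the constant-coefficient recurrence `j·b_{j-1} - c(n-j)·b_{j+1} = 0`,
`0 ≤ j ≤ n` (the boundary values `b_{-1}`, `b_{n+1}` occur only with zero coefficient).
If `c ≠ 0` and `n = 2l` is even, then `b_odd = 0` and
`b_{2p} = (1·3···(2p-1)) b₀ / (c^p (n-1)(n-3)···(n-2p+1))` for `1 ≤ p ≤ l`;
if `c ≠ 0` and `n` is odd, then all `b_j = 0`;
if `c = 0`, the solutions are exactly those with `b₀ = ⋯ = b_{n-1} = 0`. -/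
theorem recurrence_solutions (n : ℕ) (hn : 2 ≤ n) (c : ℝ) (b : ℕ → ℝ) :
    ((∀ j ≤ n, (j : ℝ) * b (j - 1) - c * ((n : ℝ) - (j : ℝ)) * b (j + 1) = 0) →
      c ≠ 0 →
      ((∀ l, n = 2 * l →
          (∀ j, 2 * j + 1 ≤ n → b (2 * j + 1) = 0) ∧
          (∀ p, 1 ≤ p → p ≤ l →
            b (2 * p) = (∏ i ∈ range p, (2 * (i : ℝ) + 1)) * b 0 /
              (c ^ p * ∏ i ∈ range p, ((n : ℝ) - (2 * (i : ℝ) + 1))))) ∧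
        (Odd n → ∀ j ≤ n, b j = 0))) ∧
    (c = 0 →
      ((∀ j ≤ n, (j : ℝ) * b (j - 1) - c * ((n : ℝ) - (j : ℝ)) * b (j + 1) = 0) ↔
        ∀ j < n, b j = 0)) :=
  recurrence_solutions_general n c b
end

section
/- Let n = 2l, let c, λ₁,…,λₙ be real numbers, and let Ω be the n×n skew-symmetric matrix with entries in the even exterior algebra of Rⁿ given by Ω_{ij} = (c + λᵢλⱼ) eⁱ∧eʲ, where e¹,…,eⁿ is the standard basis of (Rⁿ)*. Then Pf(Ω) = [Σ_{p=0}^{l} (2l-2p-1)!!(2p-1)!! c^{l-p} S_{2p}(λ₁,…,λₙ)] · e¹∧⋯∧eⁿ, where S_{2p} is the elementary symmetric polynomial of degree 2p. -/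
/-!
Each term of the Pfaffian is `sgn σ · ∏ (c + λ_a λ_b) · e^{σ(1)} ∧ ⋯ ∧ e^{σ(n)}`, and reordering
the wedge product produces a second factor `sgn σ`; so `Pf(Ω)` is the sum over perfect matchings
`∑_M ∏_{\{a,b\} ∈ M} (c + λ_a λ_b)` times `e¹ ∧ ⋯ ∧ eⁿ`. Sorting the matchings of `s ∪ {a}` by
the partner `w` of `a` gives the recursion
`M_{l+1}(s ∪ {a}) = ∑_{w ∈ s} (c + λ_a λ_w) M_l(s \ {w})`, and the right-hand side obeys the
same recursion: summing `S_q(s \ {w})` and `λ_w S_q(s \ {w})` over `w ∈ s` gives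
`(|s| - q) S_q(s)` and `(q + 1) S_{q+1}(s)`, while `(2l-2p+1) · (2l-2p-1)!! = (2l-2p+1)!!` and
`(2p+1) · (2p-1)!! = (2p+1)!!` match the coefficients.
-/

open Finset Equiv

/-- The Pfaffian of a `2m × 2m` matrix over a (not necessarily commutative) ring:
the sum over perfect matchings, encoded as permutations `σ` with
`σ(2i) < σ(2i+1)` and `σ(0) < σ(2) < ⋯ < σ(2m-2)`, of
`sgn σ · X_{σ(0) σ(1)} ⋯ X_{σ(2m-2) σ(2m-1)}` (ordered product). -/
def pfaffian {R : Type*} [Ring R] (m : ℕ) (X : Matrix (Fin (2 * m)) (Fin (2 * m)) R) : R :=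
  ∑ σ ∈ univ.filter (fun σ : Perm (Fin (2 * m)) =>
      (∀ i : Fin m, σ ⟨2 * i, by have := i.isLt; omega⟩ < σ ⟨2 * i + 1, by have := i.isLt; omega⟩) ∧
      (∀ i j : Fin m, i < j →
        σ ⟨2 * i, by have := i.isLt; omega⟩ < σ ⟨2 * j, by have := j.isLt; omega⟩)),
    (Perm.sign σ : ℤ) •
      ((List.finRange m).map (fun (i : Fin m) =>
        X (σ ⟨2 * i, by have := i.isLt; omega⟩) (σ ⟨2 * i + 1, by have := i.isLt; omega⟩))).prod

/-- The basis covector `eⁱ`, as the degree-one element `ι (eᵢ)` of the exterior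
algebra of `ℝⁿ`. -/
noncomputable def eVec (n : ℕ) (i : Fin n) : ExteriorAlgebra ℝ (Fin n → ℝ) :=
  ExteriorAlgebra.ι ℝ (Pi.single i 1)

/-- The top form `e¹ ∧ ⋯ ∧ eⁿ`. -/
noncomputable def topForm (n : ℕ) : ExteriorAlgebra ℝ (Fin n → ℝ) :=
  ((List.finRange n).map (eVec n)).prod

namespace AllendoerferWeil

section ElementarySymmetric

variable {α R : Type*} [CommSemiring R]

def esymmOn (s : Finset α) (f : α → R) (q : ℕ) : R :=
  ∑ t ∈ powersetCard q s, ∏ i ∈ t, f i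

lemma esymmOn_zero (s : Finset α) (f : α → R) : esymmOn s f 0 = 1 := by
  simp [esymmOn]

lemma esymmOn_eq_zero_of_card_lt {s : Finset α} (f : α → R) {q : ℕ} (h : s.card < q) :
    esymmOn s f q = 0 := by
  rw [esymmOn, powersetCard_eq_empty.mpr h, sum_empty]

lemma esymmOn_map {β : Type*} (e : β ↪ α) (s : Finset β) (f : α → R) (q : ℕ) :
    esymmOn (s.map e) f q = esymmOn s (f ∘ e) q := by
  rw [esymmOn, powersetCard_map, sum_map]
  exact sum_congr rfl fun t _ => prod_map t e f

lemma esymmOn_insert [DecidableEq α] {a : α} {s : Finset α} (ha : a ∉ s) (f : α → R) (q : ℕ) :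
    esymmOn (insert a s) f (q + 1) = esymmOn s f (q + 1) + f a * esymmOn s f q := by
  have not_mem {t} (ht : t ∈ powersetCard q s) : a ∉ t := fun h => ha ((mem_powersetCard.1 ht).1 h)
  rw [esymmOn, powersetCard_succ_insert ha, sum_union, sum_image, esymmOn, esymmOn, mul_sum]
  · exact congrArg _ (sum_congr rfl fun t ht => prod_insert (not_mem ht))
  · intro x hx y hy hxy
    rw [← erase_insert (not_mem hx), ← erase_insert (not_mem hy), hxy]
  · refine disjoint_left.2 fun t ht ht' => ?_
    obtain ⟨t', -, rfl⟩ := mem_image.1 ht'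
    exact ha ((mem_powersetCard.1 ht).1 (mem_insert_self _ _))

/-- Each `q`-subset of `s` avoids exactly `#s - q` points of `s`. -/
lemma sum_esymmOn_erase [DecidableEq α] (s : Finset α) (f : α → R) (q : ℕ) :
    ∑ w ∈ s, esymmOn (s.erase w) f q = ((s.card - q : ℕ) : R) * esymmOn s f q := by
  have avoiding (w : α) : powersetCard q (s.erase w) = (powersetCard q s).filter (w ∉ ·) := by
    ext t
    simp only [mem_powersetCard, mem_filter, subset_erase]
    tauto
  simp only [esymmOn, avoiding, sum_filter]
  rw [sum_comm, mul_sum]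
  refine sum_congr rfl fun t ht => ?_
  obtain ⟨hts, hcard⟩ := mem_powersetCard.1 ht
  rw [← sum_filter, sum_const, nsmul_eq_mul, ← sdiff_eq_filter, card_sdiff_of_subset hts, hcard]

/-- Each `(q + 1)`-subset `t` of `s` arises as `insert w t'` in exactly `q + 1` ways. -/
lemma sum_mul_esymmOn_erase [DecidableEq α] (s : Finset α) (f : α → R) (q : ℕ) :
    ∑ w ∈ s, f w * esymmOn (s.erase w) f q = ((q + 1 : ℕ) : R) * esymmOn s f (q + 1) := by
  have hR : ((q + 1 : ℕ) : R) * esymmOn s f (q + 1) =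
      ∑ t ∈ powersetCard (q + 1) s, ∑ _w ∈ t, ∏ i ∈ t, f i := by
    rw [esymmOn, mul_sum]
    refine sum_congr rfl fun t ht => ?_
    rw [sum_const, nsmul_eq_mul, (mem_powersetCard.1 ht).2]
  rw [hR]
  simp only [esymmOn, mul_sum]
  rw [sum_sigma', sum_sigma']
  refine sum_bij' (fun x _ => ⟨insert x.1 x.2, x.1⟩) (fun y _ => ⟨y.2, y.1.erase y.2⟩)
    ?_ ?_ ?_ ?_ ?_ <;> simp only [mem_sigma, mem_powersetCard, subset_erase, and_imp]
  · rintro ⟨w, t⟩ hw hts hwt hcard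
    exact ⟨⟨insert_subset hw hts, by rw [card_insert_of_notMem hwt, hcard]⟩, mem_insert_self _ _⟩
  · rintro ⟨t, w⟩ hts hcard hw
    exact ⟨hts hw, ⟨(erase_subset _ _).trans hts, notMem_erase _ _⟩,
      by rw [card_erase_of_mem hw, hcard]; rfl⟩
  · rintro ⟨w, t⟩ - - hwt -
    rw [erase_insert hwt]
  · rintro ⟨t, w⟩ - - hw
    rw [insert_erase hw]
  · rintro ⟨w, t⟩ - - hwt -
    rw [prod_insert hwt]

end ElementarySymmetric

/-- The number of perfect matchings of `2l` points that match a fixed `2p`-subset within itself. -/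
def matchingCoeff (l p : ℕ) : ℕ :=
  Nat.doubleFactorial (2 * l - 2 * p - 1) * Nat.doubleFactorial (2 * p - 1)

lemma matchingCoeff_mul_left {l p : ℕ} (hp : p ≤ l) :
    matchingCoeff l p * (2 * l + 1 - 2 * p) = matchingCoeff (l + 1) p := by
  rw [matchingCoeff, matchingCoeff, show 2 * (l + 1) - 2 * p - 1 = 2 * (l - p) + 1 by omega,
    show 2 * l - 2 * p - 1 = 2 * (l - p) - 1 by omega,
    show 2 * l + 1 - 2 * p = 2 * (l - p) + 1 by omega, Nat.doubleFactorial_add_one]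
  ring

lemma matchingCoeff_mul_right (l p : ℕ) :
    matchingCoeff l p * (2 * p + 1) = matchingCoeff (l + 1) (p + 1) := by
  have h : 2 * (l + 1) - 2 * (p + 1) - 1 = 2 * l - 2 * p - 1 := by omega
  rw [matchingCoeff, matchingCoeff, h, show 2 * (p + 1) - 1 = 2 * p + 1 by omega,
    Nat.doubleFactorial_add_one]
  ring

section Formula

variable {α R : Type*} [CommSemiring R]

def pfaffianFormula (c : R) (l : ℕ) (s : Finset α) (f : α → R) : R :=
  ∑ p ∈ range (l + 1), (matchingCoeff l p : R) * c ^ (l - p) * esymmOn s f (2 * p)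

lemma pfaffianFormula_map {β : Type*} (c : R) (l : ℕ) (e : β ↪ α) (s : Finset β) (f : α → R) :
    pfaffianFormula c l (s.map e) f = pfaffianFormula c l s (f ∘ e) := by
  simp only [pfaffianFormula, esymmOn_map]

variable [DecidableEq α] (c : R) {l : ℕ} {s : Finset α} (f : α → R)

lemma pfaffianFormula_insert {a : α} (ha : a ∉ s) (hs : s.card ≤ 2 * l + 1) :
    pfaffianFormula c (l + 1) (insert a s) f =
      ∑ p ∈ range (l + 1), ((matchingCoeff (l + 1) p : R) * c ^ (l + 1 - p) * esymmOn s f (2 * p) +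
        (matchingCoeff (l + 1) (p + 1) : R) * c ^ (l - p) * (f a * esymmOn s f (2 * p + 1))) := by
  set X : ℕ → R := fun p => (matchingCoeff (l + 1) p : R) * c ^ (l + 1 - p) * esymmOn s f (2 * p)
  have shift : ∑ p ∈ range (l + 1), X p = ∑ p ∈ range (l + 1), X (p + 1) + X 0 := by
    rw [← sum_range_succ', sum_range_succ X (l + 1)]
    simp only [X, esymmOn_eq_zero_of_card_lt f (show s.card < 2 * (l + 1) by omega), mul_zero,
      add_zero]
  rw [sum_add_distrib, shift, add_right_comm, ← sum_add_distrib, pfaffianFormula, sum_range_succ']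
  congr 1
  · refine sum_congr rfl fun p _ => ?_
    simp only [X]
    rw [show 2 * (p + 1) = 2 * p + 1 + 1 by ring, esymmOn_insert ha,
      show l + 1 - (p + 1) = l - p by omega]
    ring
  · simp only [X, Nat.mul_zero, esymmOn_zero]

lemma sum_mul_pfaffianFormula_erase (a : α) :
    ∑ w ∈ s, (c + f a * f w) * pfaffianFormula c l (s.erase w) f =
      ∑ p ∈ range (l + 1), (matchingCoeff l p : R) * c ^ (l - p) *
        (c * (((s.card - 2 * p : ℕ) : R) * esymmOn s f (2 * p)) +
          f a * (((2 * p + 1 : ℕ) : R) * esymmOn s f (2 * p + 1))) := by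
  simp only [pfaffianFormula, mul_sum]
  rw [sum_comm]
  refine sum_congr rfl fun p _ => ?_
  rw [← sum_esymmOn_erase, ← sum_mul_esymmOn_erase, mul_sum, mul_sum, ← sum_add_distrib, mul_sum]
  exact sum_congr rfl fun w _ => by ring

lemma sum_mul_pfaffianFormula_erase_eq {a : α} (ha : a ∉ s) (hs : s.card = 2 * l + 1) :
    ∑ w ∈ s, (c + f a * f w) * pfaffianFormula c l (s.erase w) f =
      pfaffianFormula c (l + 1) (insert a s) f := by
  rw [sum_mul_pfaffianFormula_erase, pfaffianFormula_insert c f ha hs.le, hs]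
  refine sum_congr rfl fun p hp => ?_
  have hp : p ≤ l := Nat.lt_succ_iff.1 (mem_range.1 hp)
  rw [← matchingCoeff_mul_left hp, ← matchingCoeff_mul_right, Nat.cast_mul, Nat.cast_mul,
    show l + 1 - p = l - p + 1 by omega, pow_succ]
  ring

end Formula

section PfaffianPerms

def pfaffianPerms (m : ℕ) : Finset (Perm (Fin (2 * m))) :=
  univ.filter (fun σ : Perm (Fin (2 * m)) =>
      (∀ i : Fin m, σ ⟨2 * i, by have := i.isLt; omega⟩ < σ ⟨2 * i + 1, by have := i.isLt; omega⟩) ∧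
      (∀ i j : Fin m, i < j →
        σ ⟨2 * i, by have := i.isLt; omega⟩ < σ ⟨2 * j, by have := j.isLt; omega⟩))

variable {m : ℕ} {σ : Perm (Fin (2 * m))}

lemma mem_pfaffianPerms :
    σ ∈ pfaffianPerms m ↔
      (∀ i : Fin m, σ ⟨2 * i, by have := i.isLt; omega⟩ < σ ⟨2 * i + 1, by have := i.isLt; omega⟩) ∧
      (∀ i j : Fin m, i < j →
        σ ⟨2 * i, by have := i.isLt; omega⟩ < σ ⟨2 * j, by have := j.isLt; omega⟩) := by
  simp [pfaffianPerms]

/- The next three lemmas take positions as natural numbers `x = 2i`, `y = 2i+1`, … so that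
they apply to any of the syntactically different `Fin` literals for the same position. -/

lemma val_apply_lt_of_pair (hσ : σ ∈ pfaffianPerms m) {i x y : ℕ} (hi : i < m)
    (hx : x < 2 * m) (hy : y < 2 * m) (ex : x = 2 * i) (ey : y = 2 * i + 1) :
    (σ ⟨x, hx⟩ : ℕ) < σ ⟨y, hy⟩ := by
  subst ex ey
  exact (mem_pfaffianPerms.1 hσ).1 ⟨i, hi⟩

lemma val_apply_lt_of_lt (hσ : σ ∈ pfaffianPerms m) {i j x y : ℕ} (hij : i < j) (hj : j < m)
    (hx : x < 2 * m) (hy : y < 2 * m) (ex : x = 2 * i) (ey : y = 2 * j) :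
    (σ ⟨x, hx⟩ : ℕ) < σ ⟨y, hy⟩ := by
  subst ex ey
  exact (mem_pfaffianPerms.1 hσ).2 ⟨i, by omega⟩ ⟨j, hj⟩ hij

lemma mem_pfaffianPerms_of
    (pair : ∀ i (hx : 2 * i < 2 * m) (hy : 2 * i + 1 < 2 * m),
      (σ ⟨2 * i, hx⟩ : ℕ) < σ ⟨2 * i + 1, hy⟩)
    (sorted : ∀ i j, i < j → j < m → ∀ (hx : 2 * i < 2 * m) (hy : 2 * j < 2 * m),
      (σ ⟨2 * i, hx⟩ : ℕ) < σ ⟨2 * j, hy⟩) :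
    σ ∈ pfaffianPerms m :=
  mem_pfaffianPerms.2 ⟨fun i => pair i _ _, fun i j hij => sorted i j hij j.isLt _ _⟩

/-- Position `0` is the smallest of the first entries of the pairs, hence of all entries. -/
lemma val_apply_zero (hσ : σ ∈ pfaffianPerms m) (h0 : 0 < 2 * m) : (σ ⟨0, h0⟩ : ℕ) = 0 := by
  obtain ⟨j, hj⟩ := σ.surjective ⟨0, h0⟩
  have hj2 := j.isLt
  have hpair : (σ ⟨2 * (j / 2), by omega⟩ : ℕ) ≤ σ j := by
    rcases Nat.mod_two_eq_zero_or_one j with hr | hr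
    · exact le_of_eq (congrArg (fun v => (σ v : ℕ)) (Fin.ext (by simp; omega)))
    · exact (val_apply_lt_of_pair hσ (i := j / 2) (by omega) _ j.isLt rfl (by omega)).le
  have hfirst : (σ ⟨0, h0⟩ : ℕ) ≤ σ ⟨2 * (j / 2), by omega⟩ := by
    rcases Nat.eq_zero_or_pos (j / 2) with hq | hq
    · exact le_of_eq (congrArg (fun v => (σ v : ℕ)) (Fin.ext (by simp [hq])))
    · exact (val_apply_lt_of_lt hσ hq (by omega) h0 _ (i := 0) rfl rfl).le
  rw [hj] at hpair
  simp only at hpair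
  omega

end PfaffianPerms

def matchingSum {R : Type*} [CommSemiring R] (m : ℕ) (g : Fin (2 * m) → Fin (2 * m) → R) : R :=
  ∑ σ ∈ pfaffianPerms m, ∏ i : Fin m,
    g (σ ⟨2 * i, by have := i.isLt; omega⟩) (σ ⟨2 * i + 1, by have := i.isLt; omega⟩)

section FirstPair

variable {l : ℕ}

def succSuccAbove (k : Fin (2 * l + 1)) (v : Fin (2 * l)) : Fin (2 * (l + 1)) :=
  (k.succAbove v).succ

lemma val_succSuccAbove (k : Fin (2 * l + 1)) (v : Fin (2 * l)) :
    (succSuccAbove k v : ℕ) = if (v : ℕ) < k then (v : ℕ) + 1 else (v : ℕ) + 2 := by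
  rw [succSuccAbove, Fin.val_succ]
  split_ifs with h
  · rw [Fin.succAbove_of_castSucc_lt _ _ (Fin.lt_def.2 h), Fin.val_castSucc]
  · rw [Fin.succAbove_of_le_castSucc _ _ (Fin.le_def.2 (by simpa using h)), Fin.val_succ]

lemma succSuccAbove_injective (k : Fin (2 * l + 1)) : Function.Injective (succSuccAbove k) :=
  (Fin.succ_injective _).comp Fin.succAbove_right_injective

lemma succSuccAbove_strictMono (k : Fin (2 * l + 1)) : StrictMono (succSuccAbove k) :=
  fun _ _ h => Fin.succ_lt_succ_iff.2 (Fin.strictMono_succAbove k h)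

lemma map_succSuccAbove_univ (k : Fin (2 * l + 1)) :
    univ.map ⟨succSuccAbove k, succSuccAbove_injective k⟩ =
      (univ.map (Fin.succEmb (2 * l + 1))).erase k.succ := by
  have hk : univ.map k.succAboveEmb = univ.erase k := by
    simp [map_eq_image, compl_singleton]
  change _ = (univ.map (Fin.succEmb _)).erase (Fin.succEmb _ k)
  rw [← map_erase, ← hk, map_map]
  rfl

def predPredAbove (k : Fin (2 * l + 1)) (v : Fin (2 * (l + 1))) (h0 : (v : ℕ) ≠ 0)
    (h1 : (v : ℕ) ≠ k + 1) : Fin (2 * l) :=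
  ⟨if (v : ℕ) < k + 1 then v - 1 else v - 2, by have := v.isLt; have := k.isLt; split <;> omega⟩

lemma succSuccAbove_predPredAbove (k : Fin (2 * l + 1)) (v : Fin (2 * (l + 1))) (h0 h1) :
    succSuccAbove k (predPredAbove k v h0 h1) = v := by
  refine Fin.ext ?_
  rw [val_succSuccAbove]
  simp only [predPredAbove]
  split_ifs <;> omega

def insertPairFun (k : Fin (2 * l + 1)) (σ : Perm (Fin (2 * l))) (j : Fin (2 * (l + 1))) :
    Fin (2 * (l + 1)) :=
  if h : (j : ℕ) < 2 then (if (j : ℕ) = 0 then 0 else k.succ)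
  else succSuccAbove k (σ ⟨j - 2, by have := j.isLt; omega⟩)

lemma insertPairFun_injective (k : Fin (2 * l + 1)) (σ : Perm (Fin (2 * l))) :
    Function.Injective (insertPairFun k σ) := by
  have ne_zero (v : Fin (2 * l)) : succSuccAbove k v ≠ 0 := Fin.succ_ne_zero _
  have ne_succ (v : Fin (2 * l)) : succSuccAbove k v ≠ k.succ :=
    (Fin.succ_injective _).ne (Fin.succAbove_ne k v)
  intro a b h
  apply Fin.ext
  unfold insertPairFun at h
  split_ifs at h <;> first
    | omega
    | exact absurd h (ne_zero _) | exact absurd h.symm (ne_zero _)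
    | exact absurd h (ne_succ _) | exact absurd h.symm (ne_succ _)
    | exact absurd h (Fin.succ_ne_zero k) | exact absurd h.symm (Fin.succ_ne_zero k)
    | (have := Fin.val_eq_of_eq (σ.injective (succSuccAbove_injective k h)); simp at this; omega)

noncomputable def insertPair (k : Fin (2 * l + 1)) (σ : Perm (Fin (2 * l))) :
    Perm (Fin (2 * (l + 1))) :=
  Equiv.ofBijective _ (insertPairFun_injective k σ).bijective_of_finite

lemma insertPair_zero (k : Fin (2 * l + 1)) (σ : Perm (Fin (2 * l))) (h : 0 < 2 * (l + 1)) :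
    insertPair k σ ⟨0, h⟩ = 0 := rfl

lemma insertPair_one (k : Fin (2 * l + 1)) (σ : Perm (Fin (2 * l))) (h : 1 < 2 * (l + 1)) :
    insertPair k σ ⟨1, h⟩ = k.succ := rfl

lemma insertPair_of_two_le (k : Fin (2 * l + 1)) (σ : Perm (Fin (2 * l))) {a : ℕ}
    (ha : a < 2 * (l + 1)) (h2 : 2 ≤ a) :
    insertPair k σ ⟨a, ha⟩ = succSuccAbove k (σ ⟨a - 2, by omega⟩) :=
  dif_neg (by simp only; omega)

def firstPartner (σ : Perm (Fin (2 * (l + 1)))) : Fin (2 * l + 1) :=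
  ⟨σ ⟨1, by omega⟩ - 1, by have := (σ ⟨1, by omega⟩).isLt; omega⟩

variable {σ : Perm (Fin (2 * (l + 1)))}

lemma val_firstPartner_add_one (hσ : σ ∈ pfaffianPerms (l + 1)) :
    (firstPartner σ : ℕ) + 1 = σ ⟨1, by omega⟩ := by
  have h0 := val_apply_zero hσ (by omega)
  have h01 := val_apply_lt_of_pair hσ (i := 0) (x := 0) (y := 1) (by omega) (by omega) (by omega)
    rfl rfl
  simp only [firstPartner] at h01 ⊢
  omega

lemma val_apply_add_two_ne (hσ : σ ∈ pfaffianPerms (l + 1)) (j : Fin (2 * l)) :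
    (σ ⟨j + 2, by omega⟩ : ℕ) ≠ 0 ∧ (σ ⟨j + 2, by omega⟩ : ℕ) ≠ firstPartner σ + 1 := by
  have ne {x y : ℕ} (hx : x < 2 * (l + 1)) (hy : y < 2 * (l + 1)) (hxy : x ≠ y) :
      (σ ⟨x, hx⟩ : ℕ) ≠ σ ⟨y, hy⟩ :=
    Fin.val_ne_of_ne (σ.injective.ne (Fin.ne_of_val_ne hxy))
  rw [val_firstPartner_add_one hσ, ← val_apply_zero hσ (by omega)]
  exact ⟨ne _ _ (by omega), ne _ _ (by omega)⟩

noncomputable def removeFirstPair (σ : Perm (Fin (2 * (l + 1)))) (hσ : σ ∈ pfaffianPerms (l + 1)) :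
    Perm (Fin (2 * l)) :=
  Equiv.ofBijective
    (fun j => predPredAbove (firstPartner σ) (σ ⟨j + 2, by omega⟩) (val_apply_add_two_ne hσ j).1
      (val_apply_add_two_ne hσ j).2)
    (Function.Injective.bijective_of_finite fun a b hab => by
      have := congrArg (succSuccAbove (firstPartner σ)) hab
      simp only [succSuccAbove_predPredAbove] at this
      have := Fin.val_eq_of_eq (σ.injective this)
      simp only at this
      exact Fin.ext (by omega))

lemma succSuccAbove_removeFirstPair (hσ : σ ∈ pfaffianPerms (l + 1)) (j : Fin (2 * l)) :
    succSuccAbove (firstPartner σ) (removeFirstPair σ hσ j) = σ ⟨j + 2, by omega⟩ :=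
  succSuccAbove_predPredAbove _ _ (val_apply_add_two_ne hσ j).1 (val_apply_add_two_ne hσ j).2

lemma insertPair_mem {k : Fin (2 * l + 1)} {τ : Perm (Fin (2 * l))} (hτ : τ ∈ pfaffianPerms l) :
    insertPair k τ ∈ pfaffianPerms (l + 1) := by
  apply mem_pfaffianPerms_of
  · intro i hx hy
    rcases Nat.eq_zero_or_pos i with rfl | hi
    · change insertPair k τ ⟨0, by omega⟩ < insertPair k τ ⟨1, by omega⟩
      rw [insertPair_zero, insertPair_one]
      exact Fin.succ_pos _
    · rw [insertPair_of_two_le _ _ _ (by omega), insertPair_of_two_le _ _ _ (by omega)]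
      exact succSuccAbove_strictMono k
        (val_apply_lt_of_pair hτ (i := i - 1) (by omega) _ _ (by omega) (by omega))
  · intro i j hij hj hx hy
    rw [insertPair_of_two_le _ _ (a := 2 * j) _ (by omega)]
    rcases Nat.eq_zero_or_pos i with rfl | hi
    · change (insertPair k τ ⟨0, by omega⟩ : ℕ) < _
      exact Fin.succ_pos _
    · rw [insertPair_of_two_le _ _ _ (by omega)]
      exact succSuccAbove_strictMono k
        (val_apply_lt_of_lt hτ (i := i - 1) (j := j - 1) (by omega) (by omega) _ _ (by omega)
          (by omega))

lemma removeFirstPair_mem (hσ : σ ∈ pfaffianPerms (l + 1)) :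
    removeFirstPair σ hσ ∈ pfaffianPerms l := by
  have lt_iff (a b : Fin (2 * l)) :
      removeFirstPair σ hσ a < removeFirstPair σ hσ b ↔
        σ ⟨a + 2, by omega⟩ < σ ⟨b + 2, by omega⟩ := by
    rw [← succSuccAbove_removeFirstPair hσ, ← succSuccAbove_removeFirstPair hσ,
      (succSuccAbove_strictMono _).lt_iff_lt]
  apply mem_pfaffianPerms_of
  · intro i hx hy
    exact (lt_iff _ _).2 (val_apply_lt_of_pair hσ (i := i + 1) (by omega) _ _ (by simp; omega)
      (by simp; omega))
  · intro i j hij hj hx hy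
    exact (lt_iff _ _).2 (val_apply_lt_of_lt hσ (i := i + 1) (j := j + 1) (by omega) (by omega)
      _ _ (by simp; omega) (by simp; omega))

lemma firstPartner_insertPair (k : Fin (2 * l + 1)) (τ : Perm (Fin (2 * l))) :
    firstPartner (insertPair k τ) = k :=
  Fin.ext (by simp only [firstPartner, insertPair_one, Fin.val_succ, Nat.add_sub_cancel])

lemma removeFirstPair_insertPair (k : Fin (2 * l + 1)) (τ : Perm (Fin (2 * l)))
    (h : insertPair k τ ∈ pfaffianPerms (l + 1)) : removeFirstPair (insertPair k τ) h = τ := by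
  ext j
  have hj := succSuccAbove_removeFirstPair h j
  rw [firstPartner_insertPair, insertPair_of_two_le _ _ _ (by omega)] at hj
  simp [succSuccAbove_injective k hj]

lemma insertPair_firstPartner_removeFirstPair (hσ : σ ∈ pfaffianPerms (l + 1)) :
    insertPair (firstPartner σ) (removeFirstPair σ hσ) = σ := by
  ext ⟨v, hv⟩
  rcases (by omega : v = 0 ∨ v = 1 ∨ 2 ≤ v) with rfl | rfl | h2
  · rw [insertPair_zero, Fin.val_zero, val_apply_zero hσ]
  · rw [insertPair_one, Fin.val_succ, val_firstPartner_add_one hσ]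
  · rw [insertPair_of_two_le _ _ _ h2, succSuccAbove_removeFirstPair]
    simp only [Nat.sub_add_cancel h2]

lemma prod_insertPair {R : Type*} [CommMonoid R] (g : Fin (2 * (l + 1)) → Fin (2 * (l + 1)) → R)
    (k : Fin (2 * l + 1)) (τ : Perm (Fin (2 * l))) :
    ∏ i : Fin (l + 1), g (insertPair k τ ⟨2 * i, by omega⟩) (insertPair k τ ⟨2 * i + 1, by omega⟩) =
      g 0 k.succ * ∏ i : Fin l, g (succSuccAbove k (τ ⟨2 * i, by omega⟩))
        (succSuccAbove k (τ ⟨2 * i + 1, by omega⟩)) := by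
  rw [Fin.prod_univ_succ]
  -- `insertPair` evaluates definitionally at `0`, `1` and at `2(i+1)`, `2(i+1)+1`.
  rfl

lemma matchingSum_succ {R : Type*} [CommSemiring R]
    (g : Fin (2 * (l + 1)) → Fin (2 * (l + 1)) → R) :
    matchingSum (l + 1) g = ∑ k : Fin (2 * l + 1),
      g 0 k.succ * matchingSum l (fun a b => g (succSuccAbove k a) (succSuccAbove k b)) := by
  simp only [matchingSum, mul_sum]
  rw [← sum_product']
  symm
  refine sum_bij' (fun p _ => insertPair p.1 p.2)
    (fun σ hσ => (firstPartner σ, removeFirstPair σ hσ))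
    (fun p hp => insertPair_mem (mem_product.1 hp).2)
    (fun σ hσ => mem_product.2 ⟨mem_univ _, removeFirstPair_mem hσ⟩)
    (fun p hp => Prod.ext (firstPartner_insertPair _ _)
      (removeFirstPair_insertPair _ _ (insertPair_mem (mem_product.1 hp).2)))
    (fun σ hσ => insertPair_firstPartner_removeFirstPair hσ)
    (fun p _ => (prod_insertPair g p.1 p.2).symm)

end FirstPair

theorem matchingSum_eq_pfaffianFormula {R : Type*} [CommSemiring R] (c : R) :
    ∀ (l : ℕ) (lam : Fin (2 * l) → R),
      matchingSum l (fun a b => c + lam a * lam b) = pfaffianFormula c l univ lam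
  | 0, lam => by
    simp [matchingSum, pfaffianPerms, pfaffianFormula, matchingCoeff, esymmOn_zero]
  | l + 1, lam => by
    let S : Finset (Fin (2 * (l + 1))) := univ.map (Fin.succEmb (2 * l + 1))
    have hS : insert 0 S = univ := by rw [Fin.univ_succ, cons_eq_insert]; rfl
    have h0 : 0 ∉ S := by simp [S, Fin.succ_ne_zero]
    have hcard : S.card = 2 * l + 1 := by simp [S]
    calc matchingSum (l + 1) (fun a b => c + lam a * lam b)
        = ∑ k : Fin (2 * l + 1), (c + lam 0 * lam k.succ) *
            pfaffianFormula c l univ (lam ∘ succSuccAbove k) := by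
          rw [matchingSum_succ]
          exact sum_congr rfl fun k _ => congrArg _ (matchingSum_eq_pfaffianFormula c l _)
      _ = ∑ w ∈ S, (c + lam 0 * lam w) * pfaffianFormula c l (S.erase w) lam := by
          rw [sum_map]
          refine sum_congr rfl fun k _ => ?_
          rw [Fin.coe_succEmb, show S.erase k.succ = _ from (map_succSuccAbove_univ k).symm,
            pfaffianFormula_map]
          rfl
      _ = pfaffianFormula c (l + 1) univ lam := by
          rw [sum_mul_pfaffianFormula_erase_eq c lam h0 hcard, hS]

lemma prod_ofFn_pairs {M : Type*} [Monoid M] (l : ℕ) (a : Fin (2 * l) → M) :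
    (List.ofFn fun i : Fin l => a ⟨2 * i, by omega⟩ * a ⟨2 * i + 1, by omega⟩).prod =
      (List.ofFn a).prod := by
  rw [List.ofFn_mul' a, List.prod_flatten, List.map_ofFn]
  congr 2
  funext i
  simp [List.ofFn_succ]

lemma prod_ofFn_smul {R A : Type*} [CommSemiring R] [Semiring A] [Algebra R A] :
    ∀ {m : ℕ} (f : Fin m → R) (g : Fin m → A),
      (List.ofFn fun i => f i • g i).prod = (∏ i, f i) • (List.ofFn g).prod
  | 0, _, _ => by simp
  | m + 1, f, g => by
    rw [List.ofFn_succ, List.ofFn_succ, List.prod_cons, List.prod_cons,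
      prod_ofFn_smul (fun i => f i.succ) (fun i => g i.succ), Fin.prod_univ_succ,
      smul_mul_smul_comm]

lemma prod_ofFn_eVec_perm (n : ℕ) (σ : Perm (Fin n)) :
    (List.ofFn fun j => eVec n (σ j)).prod = ((Perm.sign σ : ℤ) : ℝ) • topForm n := by
  have h := (ExteriorAlgebra.ιMulti ℝ n).map_perm (fun i => (Pi.single i 1 : Fin n → ℝ)) σ
  rw [ExteriorAlgebra.ιMulti_apply, ExteriorAlgebra.ιMulti_apply] at h
  rw [topForm, ← List.ofFn_eq_map, Units.smul_def, ← Int.cast_smul_eq_zsmul ℝ] at *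
  exact h

theorem pfaffian_smul_eVec_mul_eVec (l : ℕ) (g : Fin (2 * l) → Fin (2 * l) → ℝ) :
    pfaffian l (Matrix.of fun i j => g i j • (eVec (2 * l) i * eVec (2 * l) j)) =
      matchingSum l g • topForm (2 * l) := by
  rw [matchingSum, sum_smul]
  refine sum_congr rfl fun σ _ => ?_
  simp only [Matrix.of_apply, ← List.ofFn_eq_map]
  rw [prod_ofFn_smul, prod_ofFn_pairs l fun j => eVec (2 * l) (σ j), prod_ofFn_eVec_perm,
    ← Int.cast_smul_eq_zsmul ℝ, smul_smul, smul_smul, mul_right_comm, ← Int.cast_mul,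
    Int.units_coe_mul_self, Int.cast_one, one_mul]

end AllendoerferWeil

theorem pfaffian_curvature_matrix_general (l : ℕ) (c : ℝ) (lam : Fin (2 * l) → ℝ) :
    pfaffian l
        (Matrix.of fun i j : Fin (2 * l) =>
          (c + lam i * lam j) • (eVec (2 * l) i * eVec (2 * l) j)) =
      (∑ p ∈ range (l + 1),
          ((Nat.doubleFactorial (2 * l - 2 * p - 1) * Nat.doubleFactorial (2 * p - 1) : ℕ) : ℝ)
            * c ^ (l - p) *
            ∑ s ∈ powersetCard (2 * p) (univ : Finset (Fin (2 * l))), ∏ i ∈ s, lam i)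
        • topForm (2 * l) := by
  rw [AllendoerferWeil.pfaffian_smul_eVec_mul_eVec, AllendoerferWeil.matchingSum_eq_pfaffianFormula]
  rfl

/-- Allendoerfer–Weil: for `n = 2l` and the skew-symmetric matrix of `2`-forms
`Ω_{ij} = (c + λᵢλⱼ) eⁱ∧eʲ`, one has
`Pf(Ω) = [∑_{p=0}^{l} (2l-2p-1)!!(2p-1)!! c^{l-p} S_{2p}(λ)] e¹∧⋯∧eⁿ`,
where `S_{2p}` is the elementary symmetric polynomial of degree `2p`. -/
theorem pfaffian_curvature_matrix (l : ℕ) (hl : 1 ≤ l) (c : ℝ) (lam : Fin (2 * l) → ℝ) :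
    pfaffian l
        (Matrix.of fun i j : Fin (2 * l) =>
          (c + lam i * lam j) • (eVec (2 * l) i * eVec (2 * l) j)) =
      (∑ p ∈ range (l + 1),
          ((Nat.doubleFactorial (2 * l - 2 * p - 1) * Nat.doubleFactorial (2 * p - 1) : ℕ) : ℝ)
            * c ^ (l - p) *
            ∑ s ∈ powersetCard (2 * p) (univ : Finset (Fin (2 * l))), ∏ i ∈ s, lam i)
        • topForm (2 * l) :=
  pfaffian_curvature_matrix_general l c lam
end

section
/- Let n = 2l, c, λ, μ real numbers, and let Ω be the skew-symmetric matrix of 2-forms with Ω_{ij} = (c + νᵢνⱼ) eⁱ∧eʲ where ν₁ = λ and ν₂ = ⋯ = νₙ = μ. Then Pf(Ω) = (2l-1)!! (c + λμ)(c + μ²)^{l-1} · e¹∧⋯∧eⁿ. -/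
/-!
Every permutation `σ` indexing a term of the Pfaffian fixes `0`, so the term pairs `e¹` with some
`eʲ`, `j ≠ 1`, and pairs the remaining covectors among themselves: its scalar factor is
`(c + λμ)(c + μ²)^{l-1}`. Reordering the wedge product of the `eⁱ` into `e¹ ∧ ⋯ ∧ eⁿ` costs the
factor `sign σ`, which cancels the sign in the Pfaffian. So all terms are equal, and there are
`(2l-1)!!` of them: a term is determined by the partner of `0` and a term for the remaining `2l-2`
indices.
-/

open Finset Equiv

namespace Fin

variable {n : ℕ}

def consPerm (q : Fin (n + 1)) (e : Perm (Fin n)) : Perm (Fin (n + 1)) :=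
  (finSuccEquiv n).trans ((Equiv.optionCongr e).trans (finSuccEquiv' q).symm)

@[simp] lemma consPerm_apply_zero (q : Fin (n + 1)) (e : Perm (Fin n)) : consPerm q e 0 = q := by
  simp [consPerm]

@[simp] lemma consPerm_apply_succ (q : Fin (n + 1)) (e : Perm (Fin n)) (i : Fin n) :
    consPerm q e i.succ = q.succAbove (e i) := by
  simp [consPerm]

lemma consPerm_injective2 : Function.Injective2 (consPerm (n := n)) := by
  intro q q' e e' h
  obtain rfl : q = q' := by simpa using congr($h 0)
  exact ⟨rfl, Equiv.ext fun i => by simpa using congr($h i.succ)⟩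

-- An injection between types of the same cardinality `(n + 1) * n! = (n + 1)!`.
lemma consPerm_bijective : Function.Bijective (Function.uncurry (consPerm (n := n))) := by
  rw [Fintype.bijective_iff_injective_and_card]
  refine ⟨consPerm_injective2.uncurry, ?_⟩
  simp [Fintype.card_perm, Nat.factorial_succ]

end Fin

lemma List.prod_map_smul {R A ι : Type*} [CommSemiring R] [Semiring A] [Algebra R A]
    (r : ι → R) (x : ι → A) (L : List ι) :
    (L.map fun i => r i • x i).prod = (L.map r).prod • (L.map x).prod := by
  induction L with
  | nil => simp
  | cons a L ih => simp only [List.map_cons, List.prod_cons, ih, smul_mul_smul_comm]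

lemma prod_map_eVec_perm {n : ℕ} (σ : Perm (Fin n)) :
    ((List.finRange n).map fun j => eVec n (σ j)).prod = (Perm.sign σ : ℤ) • topForm n := by
  have hιMulti : ∀ v : Fin n → Fin n → ℝ, ExteriorAlgebra.ιMulti ℝ n v =
      ((List.finRange n).map fun j => ExteriorAlgebra.ι ℝ (v j)).prod := fun v => by
    rw [ExteriorAlgebra.ιMulti_apply, List.ofFn_eq_map]
  have := (ExteriorAlgebra.ιMulti ℝ n).map_perm (fun j => Pi.single j (1 : ℝ)) σ
  rwa [hιMulti, hιMulti, Units.smul_def] at this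

namespace Pfaffian

variable {m : ℕ}

def evenIdx (i : Fin m) : Fin (2 * m) := ⟨2 * i, by omega⟩

def oddIdx (i : Fin m) : Fin (2 * m) := ⟨2 * i + 1, by omega⟩

lemma evenIdx_zero : @evenIdx (m + 1) 0 = (0 : Fin (2 * m + 1 + 1)) := rfl

lemma evenIdx_injective : Function.Injective (evenIdx (m := m)) := by
  intro i j h
  simp only [evenIdx, Fin.ext_iff] at h ⊢
  omega

lemma oddIdx_ne_evenIdx (i j : Fin m) : oddIdx i ≠ evenIdx j := by
  simp only [evenIdx, oddIdx, ne_eq, Fin.ext_iff]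
  omega

lemma exists_evenIdx_or_oddIdx (x : Fin (2 * m)) : ∃ i, evenIdx i = x ∨ oddIdx i = x :=
  ⟨⟨x / 2, by omega⟩, by simp only [evenIdx, oddIdx, Fin.ext_iff]; omega⟩

lemma prod_map_evenIdx_mul_oddIdx {M : Type*} [Monoid M] (f : Fin (2 * m) → M) :
    ((List.finRange m).map fun i => f (evenIdx i) * f (oddIdx i)).prod =
      ((List.finRange (2 * m)).map f).prod := by
  rw [← List.ofFn_eq_map, ← List.ofFn_eq_map, List.ofFn_mul', List.prod_flatten, List.map_ofFn]
  congr 2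
  funext i
  simp [List.ofFn_succ, evenIdx, oddIdx]

def IsMatchingPerm (σ : Perm (Fin (2 * m))) : Prop :=
  (∀ i, σ (evenIdx i) < σ (oddIdx i)) ∧ ∀ i j, i < j → σ (evenIdx i) < σ (evenIdx j)

instance : DecidablePred (IsMatchingPerm (m := m)) :=
  fun _ => inferInstanceAs (Decidable (_ ∧ _))

lemma pfaffian_eq_sum {R : Type*} [Ring R] (X : Matrix (Fin (2 * m)) (Fin (2 * m)) R) :
    pfaffian m X = ∑ σ ∈ univ.filter IsMatchingPerm, (Perm.sign σ : ℤ) •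
      ((List.finRange m).map fun i => X (σ (evenIdx i)) (σ (oddIdx i))).prod :=
  rfl

lemma IsMatchingPerm.apply_evenIdx_zero {σ : Perm (Fin (2 * (m + 1)))} (hσ : IsMatchingPerm σ) :
    σ (evenIdx 0) = 0 := by
  have heven : ∀ i, σ (evenIdx 0) ≤ σ (evenIdx i) := by
    intro i
    rcases eq_or_ne i 0 with rfl | hi
    · rfl
    · exact (hσ.2 0 i (Fin.pos_iff_ne_zero.2 hi)).le
  have hmin : ∀ x, σ (evenIdx 0) ≤ σ x := by
    intro x
    obtain ⟨i, rfl | rfl⟩ := exists_evenIdx_or_oddIdx x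
    exacts [heven i, (heven i).trans (hσ.1 i).le]
  simpa using hmin (σ.symm 0)

section consPerm

variable (p : Fin (2 * m + 1)) (e : Perm (Fin (2 * m)))

@[simp] lemma consPerm_consPerm_oddIdx_zero :
    Fin.consPerm 0 (Fin.consPerm p e) (oddIdx (0 : Fin (m + 1))) = p.succ := by
  have : (oddIdx (0 : Fin (m + 1)) : Fin (2 * m + 1 + 1)) = Fin.succ 0 := rfl
  rw [this, Fin.consPerm_apply_succ, Fin.consPerm_apply_zero, Fin.zero_succAbove]

@[simp] lemma consPerm_consPerm_evenIdx_succ (i : Fin m) :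
    Fin.consPerm 0 (Fin.consPerm p e) (evenIdx i.succ) = (p.succAbove (e (evenIdx i))).succ := by
  have : (evenIdx i.succ : Fin (2 * m + 1 + 1)) = (evenIdx i).succ.succ := by
    simp only [evenIdx, Fin.ext_iff, Fin.val_succ]; omega
  simp [this]

@[simp] lemma consPerm_consPerm_oddIdx_succ (i : Fin m) :
    Fin.consPerm 0 (Fin.consPerm p e) (oddIdx i.succ) = (p.succAbove (e (oddIdx i))).succ := by
  have : (oddIdx i.succ : Fin (2 * m + 1 + 1)) = (oddIdx i).succ.succ := by
    simp only [oddIdx, Fin.ext_iff, Fin.val_succ]; omega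
  simp [this]

lemma isMatchingPerm_consPerm_consPerm_iff :
    IsMatchingPerm (m := m + 1) (Fin.consPerm 0 (Fin.consPerm p e)) ↔ IsMatchingPerm e := by
  simp [IsMatchingPerm, Fin.forall_fin_succ, evenIdx_zero]

end consPerm

lemma IsMatchingPerm.exists_eq_consPerm_consPerm {σ : Perm (Fin (2 * (m + 1)))}
    (hσ : IsMatchingPerm σ) : ∃ p e, Fin.consPerm 0 (Fin.consPerm p e) = σ := by
  obtain ⟨⟨q, τ⟩, rfl⟩ := Fin.consPerm_bijective.2 σ
  obtain ⟨⟨p, e⟩, rfl⟩ := Fin.consPerm_bijective.2 τ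
  obtain rfl : q = 0 := by simpa [evenIdx_zero] using hσ.apply_evenIdx_zero
  exact ⟨p, e, rfl⟩

-- A matching of `2m + 2` points pairs `0` with `p.succ` and matches the other `2m` points by `e`.
lemma filter_isMatchingPerm_succ :
    univ.filter (IsMatchingPerm (m := m + 1)) =
      (univ ×ˢ univ.filter (IsMatchingPerm (m := m))).image
        fun pe => Fin.consPerm 0 (Fin.consPerm pe.1 pe.2) := by
  ext σ
  simp only [mem_filter, mem_univ, true_and, mem_image, mem_product, Prod.exists]
  constructor
  · intro hσ
    obtain ⟨p, e, rfl⟩ := hσ.exists_eq_consPerm_consPerm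
    exact ⟨p, e, (isMatchingPerm_consPerm_consPerm_iff p e).1 hσ, rfl⟩
  · rintro ⟨p, e, he, rfl⟩
    exact (isMatchingPerm_consPerm_consPerm_iff p e).2 he

lemma card_filter_isMatchingPerm (m : ℕ) :
    #(univ.filter (IsMatchingPerm (m := m))) = Nat.doubleFactorial (2 * m - 1) := by
  induction m with
  | zero => rfl
  | succ m ih =>
    have hinj : Function.Injective fun pe : Fin (2 * m + 1) × Perm (Fin (2 * m)) =>
        Fin.consPerm 0 (Fin.consPerm pe.1 pe.2) :=
      (Fin.consPerm_injective2.right 0).comp Fin.consPerm_injective2.uncurry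
    rw [filter_isMatchingPerm_succ, card_image_of_injective _ hinj, card_product, card_univ,
      Fintype.card_fin, ih, show 2 * (m + 1) - 1 = 2 * m + 1 by omega,
      Nat.doubleFactorial_add_one]

lemma pfaffian_eq_smul_of_forall {R : Type*} [Ring R] (X : Matrix (Fin (2 * m)) (Fin (2 * m)) R)
    (x : R) (h : ∀ σ, IsMatchingPerm σ → (Perm.sign σ : ℤ) •
      ((List.finRange m).map fun i => X (σ (evenIdx i)) (σ (oddIdx i))).prod = x) :
    pfaffian m X = Nat.doubleFactorial (2 * m - 1) • x := by
  rw [pfaffian_eq_sum, sum_congr rfl fun σ hσ => h σ (mem_filter.1 hσ).2, sum_const,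
    card_filter_isMatchingPerm]

lemma sign_smul_prod_smul_eVec (σ : Perm (Fin (2 * m))) (r : Fin m → ℝ) :
    (Perm.sign σ : ℤ) • ((List.finRange m).map fun i =>
      r i • (eVec (2 * m) (σ (evenIdx i)) * eVec (2 * m) (σ (oddIdx i)))).prod =
      (∏ i, r i) • topForm (2 * m) := by
  rw [List.prod_map_smul, prod_map_evenIdx_mul_oddIdx (fun j => eVec (2 * m) (σ j)),
    prod_map_eVec_perm, ← List.ofFn_eq_map, List.prod_ofFn, ← Units.smul_def, ← Units.smul_def,
    smul_comm, smul_smul, Int.units_mul_self, one_smul]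

lemma prod_two_curvatures {k : ℕ} {σ : Perm (Fin (2 * (k + 1)))} (hσ : σ (evenIdx 0) = 0)
    (c lam mu : ℝ) (nu : Fin (2 * (k + 1)) → ℝ)
    (hnu : ∀ i : Fin (2 * (k + 1)), nu i = if (i : ℕ) = 0 then lam else mu) :
    ∏ i, (c + nu (σ (evenIdx i)) * nu (σ (oddIdx i))) = (c + lam * mu) * (c + mu ^ 2) ^ k := by
  have hlam : nu (σ (evenIdx 0)) = lam := by simp [hσ, hnu]
  have hmu : ∀ x, x ≠ evenIdx 0 → nu (σ x) = mu := by
    intro x hx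
    rw [hnu, if_neg]
    exact fun h => hx (σ.injective (hσ ▸ Fin.ext h))
  have hsucc : ∀ i : Fin k, evenIdx i.succ ≠ evenIdx 0 :=
    fun i => evenIdx_injective.ne (Fin.succ_ne_zero i)
  rw [Fin.prod_univ_succ, hlam, hmu _ (oddIdx_ne_evenIdx 0 0),
    Finset.prod_congr rfl fun i _ => by rw [hmu _ (hsucc i), hmu _ (oddIdx_ne_evenIdx _ _)],
    prod_const, card_univ, Fintype.card_fin, sq]

end Pfaffian

open Pfaffian

/-- For `n = 2l` and principal curvatures `ν₁ = λ`, `ν₂ = ⋯ = νₙ = μ`, the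
Pfaffian of `Ω_{ij} = (c + νᵢνⱼ) eⁱ∧eʲ` equals
`(2l-1)!! (c + λμ)(c + μ²)^{l-1} e¹∧⋯∧eⁿ`. -/
theorem pfaffian_two_curvatures (l : ℕ) (hl : 1 ≤ l) (c lam mu : ℝ)
    (nu : Fin (2 * l) → ℝ) (hnu : ∀ i : Fin (2 * l), nu i = if (i : ℕ) = 0 then lam else mu) :
    pfaffian l
        (Matrix.of fun i j : Fin (2 * l) =>
          (c + nu i * nu j) • (eVec (2 * l) i * eVec (2 * l) j)) =
      (((Nat.doubleFactorial (2 * l - 1) : ℕ) : ℝ) * (c + lam * mu) * (c + mu ^ 2) ^ (l - 1))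
        • topForm (2 * l) := by
  obtain ⟨k, rfl⟩ : ∃ k, l = k + 1 := ⟨l - 1, by omega⟩
  rw [pfaffian_eq_smul_of_forall _ (((c + lam * mu) * (c + mu ^ 2) ^ k) • topForm _),
    ← Nat.cast_smul_eq_nsmul ℝ, smul_smul, Nat.add_sub_cancel, mul_assoc]
  intro σ hσ
  rw [← prod_two_curvatures hσ.apply_evenIdx_zero c lam mu nu hnu]
  exact sign_smul_prod_smul_eVec σ fun i => c + nu (σ (evenIdx i)) * nu (σ (oddIdx i))
end

section
/- Let λ be a real number with λ ∉ {0,1,-1} and set λ₁ = λ, λ₂ = (λ-1)/(λ+1), λ₃ = -1/λ₁, λ₄ = -1/λ₂. For each i ∈ {1,2,3,4}, Σ_{j≠i} (1 + λⱼλᵢ)/(λᵢ - λⱼ) = 0. -/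
/-!
Writing `λᵢ = cot θᵢ`, the summand `(1 + λⱼλᵢ)/(λᵢ - λⱼ)` is `cot (θⱼ - θᵢ)`, and the four
angles are spaced by `π/4`, so each sum is `cot (π/4) + cot (π/2) + cot (3π/4) = 0`.
Algebraically: replacing `λⱼ` by `-1/λⱼ` turns the term `t` into `-1/t` (a shift by `π/2`),
the term of `λ` and `-1/λ` vanishes, and the term of `λ₁` and `λ₂` equals `1`.
-/

open Finset

section CartanTerm

variable {K : Type*} [Field K]

/-- For `x = cot α` and `y = cot β` this is `cot (β - α)`. -/
def cartanTerm (x y : K) : K := (1 + y * x) / (x - y)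

lemma cartanTerm_self (x : K) : cartanTerm x x = 0 := by
  simp [cartanTerm]

lemma cartanTerm_swap (x y : K) : cartanTerm y x = -cartanTerm x y := by
  rw [cartanTerm, cartanTerm, ← neg_sub, div_neg, mul_comm]

lemma cartanTerm_neg_one_div {y : K} (hy : y ≠ 0) (x : K) :
    cartanTerm x (-1 / y) = -(cartanTerm x y)⁻¹ := by
  rw [cartanTerm, cartanTerm, inv_div, ← neg_div, ← mul_div_mul_right _ _ hy]
  congr 1 <;> field_simp <;> ring

lemma cartanTerm_neg_one_div_left {x : K} (hx : x ≠ 0) (y : K) :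
    cartanTerm (-1 / x) y = -(cartanTerm x y)⁻¹ := by
  rw [cartanTerm_swap, cartanTerm_neg_one_div hx, cartanTerm_swap, neg_neg, inv_neg]

theorem sum_erase_cartanTerm_eq_zero {a b : K} (ha : a ≠ 0) (hb : b ≠ 0)
    (hab : cartanTerm a b = 1) (i : Fin 4) :
    ∑ j ∈ univ.erase i, cartanTerm (![a, b, -1 / a, -1 / b] i) (![a, b, -1 / a, -1 / b] j) = 0 := by
  set w : Fin 4 → K := ![a, b, -1 / a, -1 / b] with hw
  rw [sum_erase univ (f := fun j => cartanTerm (w i) (w j)) (cartanTerm_self _), Fin.sum_univ_four,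
    hw]
  fin_cases i <;>
    simp [cartanTerm_self, cartanTerm_neg_one_div, cartanTerm_neg_one_div_left, ha, hb,
      cartanTerm_swap a b, hab]

end CartanTerm

lemma cartanTerm_sub_one_div_add_one {lam : ℝ} (h2 : lam ≠ -1) :
    cartanTerm lam ((lam - 1) / (lam + 1)) = 1 := by
  have hp : lam + 1 ≠ 0 := fun h => h2 (by linarith)
  have hq : lam ^ 2 + 1 ≠ 0 := by positivity
  have hden : lam - (lam - 1) / (lam + 1) = (lam ^ 2 + 1) / (lam + 1) := by
    field_simp; ring
  rw [cartanTerm, hden, div_eq_one_iff_eq (div_ne_zero hq hp)]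
  field_simp; ring

theorem cartan_identity_g4_general (lam : ℝ) (h0 : lam ≠ 0) (h1 : lam ≠ 1) (h2 : lam ≠ -1)
    (v : Fin 4 → ℝ)
    (hv : v = ![lam, (lam - 1) / (lam + 1), -1 / lam, -1 / ((lam - 1) / (lam + 1))]) :
    ∀ i : Fin 4, ∑ j ∈ univ.erase i, (1 + v j * v i) / (v i - v j) = 0 := by
  have hb : (lam - 1) / (lam + 1) ≠ 0 :=
    div_ne_zero (sub_ne_zero.mpr h1) fun h => h2 (by linarith)
  subst hv
  exact sum_erase_cartanTerm_eq_zero h0 hb (cartanTerm_sub_one_div_add_one h2)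

/-- Cartan's fundamental formula with `c = 1`, `g = 4`, multiplicities all `1`:
for `λ ∉ {0, 1, -1}` and `λ₁ = λ`, `λ₂ = (λ-1)/(λ+1)`, `λ₃ = -1/λ₁`, `λ₄ = -1/λ₂`,
for each `i`: `∑_{j ≠ i} (1 + λⱼλᵢ)/(λᵢ - λⱼ) = 0`. -/
theorem cartan_identity_g4 (lam : ℝ) (h0 : lam ≠ 0) (h1 : lam ≠ 1) (h2 : lam ≠ -1)
    (v : Fin 4 → ℝ)
    (hv : v = ![lam, (lam - 1) / (lam + 1), -1 / lam, -1 / ((lam - 1) / (lam + 1))])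
    (hne : ∀ i j : Fin 4, i ≠ j → v i ≠ v j) :
    ∀ i : Fin 4, ∑ j ∈ univ.erase i, (1 + v j * v i) / (v i - v j) = 0 :=
  cartan_identity_g4_general lam h0 h1 h2 v hv
end

section
/- Let λ be a nonzero real number with λ² ≠ 1, and consider the 8-tuple (λ₁,λ₁,λ₂,λ₂,λ₃,λ₃,λ₄,λ₄) with λ₁ = λ, λ₂ = (λ-1)/(λ+1), λ₃ = -1/λ₁, λ₄ = -1/λ₂. Then the elementary symmetric polynomials of this 8-tuple satisfy S₆ = S₂, S₈ = S₀ = 1, and moreover S₂ = (λ⁸ - 24λ⁶ + 62λ⁴ - 24λ² + 1)/(λ²(1-λ²)²) and S₄ = (-2λ⁸ + 62λ⁶ - 152λ⁴ + 62λ² - 2)/(λ²(1-λ²)²). -/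
/-!
The generating polynomial `∏ (X + λᵢ) = ∑ S_k X^(8-k)` of the tuple is the square of
`(X + λ₁)(X + λ₃)(X + λ₂)(X + λ₄)`. Since `λ₃ = -1/λ₁`, the first pair multiplies to
`X² + p X - 1` with `p = λ₁ - λ₁⁻¹`, and likewise the second pair to `X² + q X - 1`. For the
Cayley transform `λ₂ = (λ-1)/(λ+1)` one finds `p q = -4`, so with `s = p + q` the quartic is
`X⁴ + s X³ - 6 X² - s X + 1`. Its square has coefficients `1, s² - 12, 38 - 2 s², s² - 12, 1`
in degrees `8, 6, 4, 2, 0`, and `s = (λ⁴ - 6λ² + 1) / (λ (λ² - 1))`.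
-/

open Finset

def esymm {R : Type*} [CommRing R] {n : ℕ} (k : ℕ) (v : Fin n → R) : R :=
  ∑ s ∈ powersetCard k (univ : Finset (Fin n)), ∏ i ∈ s, v i

open Polynomial

section CommRing

variable {R : Type*} [CommRing R]

theorem esymm_eq_coeff_prod_X_add_C {n k : ℕ} (v : Fin n → R) (hk : k ≤ n) :
    esymm k v = (∏ i, (X + C (v i))).coeff (n - k) := by
  rw [Finset.prod_X_add_C_coeff _ _ (by simp), card_univ, Fintype.card_fin,
    Nat.sub_sub_self hk, esymm]

theorem prod_X_add_C_pairs (a b c d : R) :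
    ∏ i, (X + C (![a, a, b, b, c, c, d, d] i)) =
      ((X + C a) * (X + C c) * ((X + C b) * (X + C d))) ^ 2 := by
  simp only [Fin.prod_univ_eight, Matrix.cons_val]
  ring

theorem quadratic_mul_quadratic_of_mul_eq_neg_four {p q : R} (h : p * q = -4) :
    (X ^ 2 + C p * X - 1) * (X ^ 2 + C q * X - 1) =
      X ^ 4 + C (p + q) * X ^ 3 - 6 * X ^ 2 - C (p + q) * X + 1 := by
  have hC : C p * C q = -4 := by rw [← C_mul, h, C_neg, C_ofNat]
  rw [C_add]
  linear_combination X ^ 2 * hC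

theorem quartic_sq (s : R) :
    (X ^ 4 + C s * X ^ 3 - 6 * X ^ 2 - C s * X + 1) ^ 2 =
      X ^ 8 + C (2 * s) * X ^ 7 + C (s ^ 2 - 12) * X ^ 6 + C (-14 * s) * X ^ 5
        + C (38 - 2 * s ^ 2) * X ^ 4 + C (14 * s) * X ^ 3 + C (s ^ 2 - 12) * X ^ 2
        + C (-2 * s) * X + 1 := by
  simp only [map_sub, map_mul, map_pow, map_neg, map_ofNat]
  ring

end CommRing

section Field

variable {K : Type*} [Field K]

theorem X_add_C_mul_X_add_C_neg_one_div {a : K} (ha : a ≠ 0) :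
    (X + C a) * (X + C (-1 / a)) = X ^ 2 + C (a - a⁻¹) * X - 1 := by
  have hinv : C a * C a⁻¹ = 1 := by rw [← C_mul, mul_inv_cancel₀ ha, C_1]
  rw [neg_div, one_div, C_neg, C_sub]
  linear_combination -hinv

theorem esymm_pairs_neg_inv {a b s : K} (ha : a ≠ 0) (hb : b ≠ 0)
    (hab : (a - a⁻¹) * (b - b⁻¹) = -4) (hs : a - a⁻¹ + (b - b⁻¹) = s) :
    esymm 2 ![a, a, b, b, -1 / a, -1 / a, -1 / b, -1 / b] = s ^ 2 - 12 ∧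
    esymm 4 ![a, a, b, b, -1 / a, -1 / a, -1 / b, -1 / b] = 38 - 2 * s ^ 2 ∧
    esymm 6 ![a, a, b, b, -1 / a, -1 / a, -1 / b, -1 / b] = s ^ 2 - 12 ∧
    esymm 8 ![a, a, b, b, -1 / a, -1 / a, -1 / b, -1 / b] = 1 := by
  have hcoeff : ∀ k ≤ 8, esymm k ![a, a, b, b, -1 / a, -1 / a, -1 / b, -1 / b] =
      ((X ^ 4 + C s * X ^ 3 - 6 * X ^ 2 - C s * X + 1) ^ 2).coeff (8 - k) := fun k hk => by
    rw [esymm_eq_coeff_prod_X_add_C _ hk, prod_X_add_C_pairs, X_add_C_mul_X_add_C_neg_one_div ha,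
      X_add_C_mul_X_add_C_neg_one_div hb, quadratic_mul_quadratic_of_mul_eq_neg_four hab, hs]
  simp only [hcoeff, Nat.reduceLeDiff, quartic_sq, coeff_add, coeff_C_mul_X_pow,
    coeff_X_pow, coeff_C_mul_X, coeff_one]
  norm_num

theorem sub_inv_mul_sub_inv_of_eq_div {x y : K} (hx : x ≠ 0) (hp : x + 1 ≠ 0) (hm : x - 1 ≠ 0)
    (hy : y = (x - 1) / (x + 1)) : (x - x⁻¹) * (y - y⁻¹) = -4 := by
  subst hy
  field_simp
  ring

end Field

/-- Principal curvatures of the isoparametric hypersurface in `S⁹` with `g = 4`,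
`m₁ = m₂ = 2`: for the 8-tuple `(λ₁,λ₁,λ₂,λ₂,λ₃,λ₃,λ₄,λ₄)` with `λ₁ = λ`,
`λ₂ = (λ-1)/(λ+1)`, `λ₃ = -1/λ₁`, `λ₄ = -1/λ₂`, one has `S₆ = S₂`, `S₈ = S₀ = 1`,
`S₂ = (λ⁸-24λ⁶+62λ⁴-24λ²+1)/(λ²(1-λ²)²)` and
`S₄ = (-2λ⁸+62λ⁶-152λ⁴+62λ²-2)/(λ²(1-λ²)²)`. -/
theorem esymm_g4_mult_two (lam : ℝ) (h0 : lam ≠ 0) (h1 : lam ^ 2 ≠ 1)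
    (l1 l2 l3 l4 : ℝ) (e1 : l1 = lam) (e2 : l2 = (lam - 1) / (lam + 1))
    (e3 : l3 = -1 / l1) (e4 : l4 = -1 / l2)
    (v : Fin 8 → ℝ) (hv : v = ![l1, l1, l2, l2, l3, l3, l4, l4]) :
    esymm 6 v = esymm 2 v ∧
    esymm 8 v = 1 ∧ esymm 0 v = 1 ∧
    esymm 2 v = (lam ^ 8 - 24 * lam ^ 6 + 62 * lam ^ 4 - 24 * lam ^ 2 + 1) /
      (lam ^ 2 * (1 - lam ^ 2) ^ 2) ∧
    esymm 4 v = (-2 * lam ^ 8 + 62 * lam ^ 6 - 152 * lam ^ 4 + 62 * lam ^ 2 - 2) /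
      (lam ^ 2 * (1 - lam ^ 2) ^ 2) := by
  have hp : lam + 1 ≠ 0 := fun h => h1 (by nlinarith)
  have hm : lam - 1 ≠ 0 := fun h => h1 (by nlinarith)
  have hl2 : l2 ≠ 0 := e2 ▸ div_ne_zero hm hp
  subst e1 hv e3 e4
  obtain ⟨hS2, hS4, hS6, hS8⟩ :=
    esymm_pairs_neg_inv h0 hl2 (sub_inv_mul_sub_inv_of_eq_div h0 hp hm e2) rfl
  refine ⟨hS6.trans hS2.symm, hS8, by simp [esymm], ?_, ?_⟩
  · rw [hS2, e2]
    field_simp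
    ring
  · rw [hS4, e2]
    field_simp
    ring
end
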